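/- If L ⊆ Σ^ω is ω-regular and ~ is its Arnold congruence, then ~ has finite index and is an ω-congruence for L: it is compatible with concatenation and recognizes L in the sense that u_i ~ u_i' for all i implies u_1 u_2 ⋯ ∈ L ⟺ u_1' u_2' ⋯ ∈ L. -/

import Mathlib

open Filter

variable {A : Type*}

/-- The interval coded by `p` occupies positions `p.1, …, p.1 + p.2 - 1` (length `p.2 > 0`). -/
def IntervalLt (p q : ℕ × ℕ) : Prop := p.1 + p.2 ≤ q.1

def IntervalDisj (p q : ℕ × ℕ) : Prop := p.1 + p.2 ≤ q.1 ∨ q.1 + q.2 ≤ p.1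

def prefixList (u : ℕ → List A) (m : ℕ) : List A := (List.range m).flatMap u

/-- Prepending a finite word to an ω-word. -/
def prepend (w : List A) (x : ℕ → A) : ℕ → A := fun n =>
  if h : n < w.length then w.get ⟨n, h⟩ else x (n - w.length)

open Classical in
/-- The infinite concatenation `u 0 · u 1 · u 2 ⋯` of a sequence of finite words, as an
ω-word; meaningful when infinitely many of the `u i` are nonempty. -/
noncomputable def omegaConcat [Inhabited A] (u : ℕ → List A) : ℕ → A := fun n =>
  if h : ∃ m, n < (prefixList u m).length
  then (prefixList u (Nat.find h)).getD n default
  else default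

/-- The ω-power `v^ω` of a finite word; meaningful when `v ≠ []`. -/
noncomputable def omegaPow [Inhabited A] (v : List A) : ℕ → A := fun n =>
  v.getD (n % v.length) default

/-- Infinitely many of the words `u i` are nonempty. -/
def InfOftenNonempty (u : ℕ → List A) : Prop := ∀ n, ∃ m, n ≤ m ∧ u m ≠ []

/-- A relation on finite words has finite index (finitely many classes). -/
def FiniteIndex (r : List A → List A → Prop) : Prop :=
  (Set.range fun w => {v | r w v}).Finite

/-- Compatibility with concatenation. -/
def ConcatCongr (r : List A → List A → Prop) : Prop :=
  ∀ u₁ u₁' u₂ u₂' : List A, r u₁ u₁' → r u₂ u₂' → r (u₁ ++ u₂) (u₁' ++ u₂')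

/-- The relation `r` recognizes `L`: relating the blocks of two infinite concatenations
pointwise preserves membership in `L`. -/
def Recognizes [Inhabited A] (r : List A → List A → Prop) (L : Set (ℕ → A)) : Prop :=
  ∀ u u' : ℕ → List A, InfOftenNonempty u → InfOftenNonempty u' →
    (∀ i, r (u i) (u' i)) → (omegaConcat u ∈ L ↔ omegaConcat u' ∈ L)

/-- Nondeterministic Büchi automaton. -/
structure BuchiAutomaton (A : Type*) where
  Q : Type
  finQ : Finite Q
  init : Set Q
  step : Q → A → Set Q
  acc : Set Q

def BuchiAutomaton.Accepts (M : BuchiAutomaton A) (x : ℕ → A) : Prop :=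
  ∃ ρ : ℕ → M.Q, ρ 0 ∈ M.init ∧ (∀ n, ρ (n + 1) ∈ M.step (ρ n) (x n)) ∧
    ∀ n, ∃ m, n ≤ m ∧ ρ m ∈ M.acc

def OmegaRegular (L : Set (ℕ → A)) : Prop :=
  ∃ M : BuchiAutomaton A, ∀ x, x ∈ L ↔ M.Accepts x

/-- ω-words over `{a, b}` (with `a = true`, `b = false`) of the form `a^{k₁} b a^{k₂} b ⋯`
whose blocks of `a`'s have unbounded size. -/
def Uset : Set (ℕ → Bool) :=
  {x | (∀ n, ∃ m, n ≤ m ∧ x m = false) ∧ ∀ n, ∃ k, ∀ i < n, x (k + i) = true}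
/-- The Arnold congruence of `L`. -/
def ArnoldEq [Inhabited A] (L : Set (ℕ → A)) (u u' : List A) : Prop :=
  (∀ (w : List A) (x : ℕ → A), prepend w (prepend u x) ∈ L ↔ prepend w (prepend u' x) ∈ L) ∧
  ∀ w v : List A, v ≠ [] →
    (prepend w (omegaPow (u ++ v)) ∈ L ↔ prepend w (omegaPow (u' ++ v)) ∈ L)

/-!
Fix a Büchi automaton `M` for `L`. The profile of a finite word `w` records, for each pair of
states, whether `M` can read `w` from one to the other, and whether it can do so through an
accepting state. Profiles compose under concatenation and take finitely many values, and whether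
`M` accepts `u₀ u₁ u₂ ⋯` depends only on the profiles of the blocks `uᵢ`. Hence words with equal
profiles are Arnold-equivalent, which bounds the index. Compatibility with concatenation is a
direct computation, using `(s t)^ω = s (t s)^ω`. For recognition, a Ramsey argument cuts both
`u₀ u₁ ⋯` and `u₀' u₁' ⋯` at common positions `I 0 < I 1 < ⋯` into nonempty segments of constant
profile, so that, up to acceptance by `M`, the two words are `W Z^ω` and `W' Z'^ω` with `W ~ W'`
and `Z ~ Z'`; the first clause of the Arnold congruence exchanges `W` for `W'`, the second `Z^ω`
for `Z'^ω`.
-/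

section Words

@[simp] lemma prefixList_zero (u : ℕ → List A) : prefixList u 0 = [] := rfl

lemma prefixList_succ (u : ℕ → List A) (m : ℕ) :
    prefixList u (m + 1) = prefixList u m ++ u m := by
  simp [prefixList, List.range_succ]

lemma prefixList_add (u : ℕ → List A) (a c : ℕ) :
    prefixList u (a + c) = prefixList u a ++ prefixList (fun i => u (a + i)) c := by
  induction c with
  | zero => simp [prefixList]
  | succ c ih => rw [← Nat.add_assoc, prefixList_succ, ih, prefixList_succ, List.append_assoc]

lemma length_prefixList_succ (u : ℕ → List A) (m : ℕ) :
    (prefixList u (m + 1)).length = (prefixList u m).length + (u m).length := by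
  simp [prefixList_succ]

lemma monotone_length_prefixList (u : ℕ → List A) :
    Monotone fun m => (prefixList u m).length :=
  monotone_nat_of_le_succ fun m => by simp [length_prefixList_succ]

lemma InfOftenNonempty.exists_lt_length_prefixList {u : ℕ → List A} (hu : InfOftenNonempty u)
    (n : ℕ) : ∃ m, n < (prefixList u m).length := by
  induction n with
  | zero =>
    obtain ⟨m, -, hm⟩ := hu 0
    exact ⟨m + 1, by simp [length_prefixList_succ, List.length_pos_iff.mpr hm]⟩
  | succ n ih =>
    obtain ⟨m, hm⟩ := ih
    obtain ⟨k, hk, hknil⟩ := hu m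
    have : (prefixList u m).length ≤ (prefixList u k).length := monotone_length_prefixList u hk
    have := List.length_pos_iff.mpr hknil
    exact ⟨k + 1, by rw [length_prefixList_succ]; omega⟩

lemma exists_mem_block {b : ℕ → ℕ} (hb0 : b 0 = 0) (hb : ∀ n, ∃ i, n < b i) (n : ℕ) :
    ∃ i, b i ≤ n ∧ n < b (i + 1) := by
  have hpos : 0 < Nat.find (hb n) := Nat.pos_of_ne_zero fun h0 => by
    have := Nat.find_spec (hb n); rw [h0, hb0] at this; omega
  refine ⟨Nat.find (hb n) - 1, not_lt.mp (Nat.find_min (hb n) (by omega)), ?_⟩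
  rw [Nat.sub_add_cancel hpos]
  exact Nat.find_spec (hb n)

lemma exists_seq_eq_on_blocks {β : Type*} {b : ℕ → ℕ} (hb : Monotone b) (hunb : ∀ n, ∃ i, n < b i)
    (σ : ℕ → ℕ → β) (hσ : ∀ i, σ i (b (i + 1) - b i) = σ (i + 1) 0) :
    ∃ ρ : ℕ → β, ∀ i, ∀ j ≤ b (i + 1) - b i, ρ (b i + j) = σ i j := by
  have hex (n : ℕ) : ∃ i, n < b (i + 1) :=
    let ⟨i, hi⟩ := hunb n; ⟨i, hi.trans_le (hb (Nat.le_succ i))⟩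
  -- `idx n` is the first block ending after `n`: at a block boundary it skips the empty blocks,
  -- whose paths are constant (`hempty`)
  let idx n := Nat.find (hex n)
  have idx_spec (n : ℕ) : n < b (idx n + 1) := Nat.find_spec (hex n)
  have idx_min {n m : ℕ} (h : m < idx n) : b (m + 1) ≤ n := not_lt.mp (Nat.find_min (hex n) h)
  have hempty {i k : ℕ} (hik : i ≤ k) (hbk : b k = b i) : σ k 0 = σ i 0 := by
    induction k, hik using Nat.le_induction with
    | base => rfl
    | succ k hik ih =>
      have h₁ : b i ≤ b k := hb hik
      have h₂ : b k ≤ b (k + 1) := hb (Nat.le_succ k)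
      rw [← hσ k, show b (k + 1) - b k = 0 by omega, ih (by omega)]
  refine ⟨fun n => σ (idx n) (n - b (idx n)), fun i j hj => ?_⟩
  have hbi : b i ≤ b (i + 1) := hb (Nat.le_succ i)
  rcases hj.lt_or_eq with hj | rfl
  · have hidx : idx (b i + j) = i := by
      refine le_antisymm (Nat.find_min' _ (by omega)) (not_lt.mp fun hlt => ?_)
      have : b (idx (b i + j) + 1) ≤ b i := hb hlt
      have := idx_spec (b i + j)
      omega
    simp only [hidx, Nat.add_sub_cancel_left]
  · rw [show b i + (b (i + 1) - b i) = b (i + 1) by omega, hσ]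
    set k := idx (b (i + 1))
    have hk : b (i + 1) < b (k + 1) := idx_spec _
    have hik : i + 1 ≤ k := not_lt.mp fun h => by
      have : b (k + 1) ≤ b (i + 1) := hb h
      omega
    have hbk : b k = b (i + 1) := by
      have h₁ : b (i + 1) ≤ b k := hb hik
      have h₂ : b (k - 1 + 1) ≤ b (i + 1) := idx_min (by omega)
      rw [Nat.sub_add_cancel (by omega)] at h₂
      omega
    show σ k (b (i + 1) - b k) = σ (i + 1) 0
    rw [hbk, Nat.sub_self, hempty hik hbk]

end Words

section OmegaWords

variable [Inhabited A]

lemma getD_prefixList_of_le (u : ℕ → List A) {k l n : ℕ} (hkl : k ≤ l)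
    (hn : n < (prefixList u k).length) :
    (prefixList u l).getD n default = (prefixList u k).getD n default := by
  obtain ⟨c, rfl⟩ := Nat.exists_eq_add_of_le hkl
  rw [prefixList_add, List.getD_append _ _ _ _ hn]

lemma omegaConcat_eq_getD (u : ℕ → List A) {m n : ℕ} (h : n < (prefixList u m).length) :
    omegaConcat u n = (prefixList u m).getD n default := by
  have hex : ∃ m, n < (prefixList u m).length := ⟨m, h⟩
  rw [omegaConcat, dif_pos hex]
  rcases le_total (Nat.find hex) m with hle | hle
  · rw [getD_prefixList_of_le u hle (Nat.find_spec hex)]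
  · rw [getD_prefixList_of_le u hle h]

lemma omegaConcat_length_prefixList_add (u : ℕ → List A) {i j : ℕ} (hj : j < (u i).length) :
    omegaConcat u ((prefixList u i).length + j) = (u i)[j] := by
  rw [omegaConcat_eq_getD u (m := i + 1) (by rw [length_prefixList_succ]; omega),
    prefixList_succ, List.getD_append_right _ _ _ _ (by omega), Nat.add_sub_cancel_left,
    List.getD_eq_getElem]

lemma omegaConcat_eq_of_forall {u : ℕ → List A} (hu : InfOftenNonempty u) {x : ℕ → A}
    (h : ∀ i j (hj : j < (u i).length), x ((prefixList u i).length + j) = (u i)[j]) :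
    omegaConcat u = x := by
  funext n
  obtain ⟨i, hi₁, hi₂⟩ :=
    exists_mem_block (b := fun m => (prefixList u m).length) rfl hu.exists_lt_length_prefixList n
  obtain ⟨j, rfl⟩ := Nat.exists_eq_add_of_le hi₁
  have hj : j < (u i).length := by rw [length_prefixList_succ] at hi₂; omega
  rw [omegaConcat_length_prefixList_add u hj, h i j hj]

lemma omegaConcat_congr {u v : ℕ → List A}
    (h : ∀ n, ∃ k l, n ≤ (prefixList u k).length ∧ prefixList u k = prefixList v l) :
    omegaConcat u = omegaConcat v := by
  funext n
  obtain ⟨k, l, hn, heq⟩ := h (n + 1)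
  rw [omegaConcat_eq_getD u (m := k) (by omega), heq,
    omegaConcat_eq_getD v (m := l) (by rw [← heq]; omega)]

end OmegaWords

section Prepend

lemma prepend_of_lt (w : List A) (x : ℕ → A) {n : ℕ} (h : n < w.length) :
    prepend w x n = w[n] := by
  simp [prepend, h]

@[simp] lemma prepend_length_add (w : List A) (x : ℕ → A) (n : ℕ) :
    prepend w x (w.length + n) = x n := by
  simp [prepend]

@[simp] lemma prepend_nil (x : ℕ → A) : prepend [] x = x := by
  funext n; simpa using prepend_length_add [] x n

lemma prepend_append (w₁ w₂ : List A) (x : ℕ → A) :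
    prepend (w₁ ++ w₂) x = prepend w₁ (prepend w₂ x) := by
  funext n
  rcases Nat.lt_or_ge n w₁.length with h | h
  · rw [prepend_of_lt _ _ (by simp; omega), prepend_of_lt _ _ h, List.getElem_append_left h]
  obtain ⟨n, rfl⟩ := Nat.exists_eq_add_of_le h
  rcases Nat.lt_or_ge n w₂.length with h₂ | h₂
  · rw [prepend_of_lt _ _ (by simp; omega), prepend_length_add, prepend_of_lt _ _ h₂,
      List.getElem_append_right (by omega)]
    simp
  · obtain ⟨n, rfl⟩ := Nat.exists_eq_add_of_le h₂
    rw [prepend_length_add, prepend_length_add, ← Nat.add_assoc, ← List.length_append,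
      prepend_length_add]

lemma eq_of_prepend_eq_self {z : List A} (hz : z ≠ []) {x y : ℕ → A} (hx : prepend z x = x)
    (hy : prepend z y = y) : x = y := by
  funext n
  induction n using Nat.strong_induction_on with
  | _ n ih =>
    rcases Nat.lt_or_ge n z.length with h | h
    · rw [← hx, ← hy, prepend_of_lt _ _ h, prepend_of_lt _ _ h]
    · obtain ⟨m, rfl⟩ := Nat.exists_eq_add_of_le h
      rw [← hx, ← hy, prepend_length_add, prepend_length_add,
        ih m (by have := List.length_pos_iff.mpr hz; omega)]

end Prepend

section OmegaPow

variable [Inhabited A]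

lemma prepend_omegaPow_self (z : List A) : prepend z (omegaPow z) = omegaPow z := by
  funext n
  rcases Nat.lt_or_ge n z.length with h | h
  · rw [prepend_of_lt _ _ h, omegaPow, Nat.mod_eq_of_lt h, List.getD_eq_getElem]
  · obtain ⟨m, rfl⟩ := Nat.exists_eq_add_of_le h
    simp [omegaPow]

lemma omegaPow_eq_of_prepend_eq_self {z : List A} (hz : z ≠ []) {x : ℕ → A}
    (hx : prepend z x = x) : omegaPow z = x :=
  eq_of_prepend_eq_self hz (prepend_omegaPow_self z) hx

lemma omegaPow_append {s t : List A} (h : s ++ t ≠ []) :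
    omegaPow (s ++ t) = prepend s (omegaPow (t ++ s)) := by
  refine omegaPow_eq_of_prepend_eq_self h ?_
  rw [prepend_append, ← prepend_append t, prepend_omegaPow_self]

lemma omegaPow_append_self {z : List A} (hz : z ≠ []) : omegaPow (z ++ z) = omegaPow z :=
  omegaPow_eq_of_prepend_eq_self (by simpa using hz) (by
    rw [prepend_append, prepend_omegaPow_self, prepend_omegaPow_self])

end OmegaPow

section Blocks

def seqCons {α : Type*} (a : α) (f : ℕ → α) : ℕ → α
  | 0 => a
  | n + 1 => f n

lemma prefixList_seqCons (w : List A) (v : ℕ → List A) (m : ℕ) :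
    prefixList (seqCons w v) (m + 1) = w ++ prefixList v m := by
  induction m with
  | zero => simp [prefixList, seqCons]
  | succ m ih => rw [prefixList_succ, ih, prefixList_succ, List.append_assoc]; rfl

lemma InfOftenNonempty.seqCons (w : List A) {v : ℕ → List A} (hv : InfOftenNonempty v) :
    InfOftenNonempty (seqCons w v) := fun n =>
  let ⟨m, hm, hne⟩ := hv n; ⟨m + 1, by omega, hne⟩

lemma InfOftenNonempty.const {z : List A} (hz : z ≠ []) : InfOftenNonempty fun _ => z :=
  fun n => ⟨n, le_rfl, hz⟩

lemma infOftenNonempty_singleton (x : ℕ → A) : InfOftenNonempty fun k => [x k] :=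
  fun n => ⟨n, le_rfl, List.cons_ne_nil _ _⟩

variable [Inhabited A]

lemma omegaConcat_seqCons (w : List A) {v : ℕ → List A} (hv : InfOftenNonempty v) :
    omegaConcat (seqCons w v) = prepend w (omegaConcat v) := by
  refine omegaConcat_eq_of_forall (hv.seqCons w) fun i j hj => ?_
  cases i with
  | zero =>
    rw [prefixList_zero, List.length_nil, Nat.zero_add]
    exact prepend_of_lt w _ hj
  | succ i =>
    rw [prefixList_seqCons, List.length_append, Nat.add_assoc, prepend_length_add]
    exact omegaConcat_length_prefixList_add v hj

lemma omegaConcat_const {z : List A} (hz : z ≠ []) : omegaConcat (fun _ => z) = omegaPow z := by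
  refine (omegaPow_eq_of_prepend_eq_self hz ?_).symm
  rw [← omegaConcat_seqCons z (InfOftenNonempty.const hz)]
  congr 1
  funext i
  cases i <;> rfl

lemma omegaConcat_singleton (x : ℕ → A) : omegaConcat (fun k => [x k]) = x := by
  have hlen (i : ℕ) : (prefixList (fun k => [x k]) i).length = i := by
    induction i with
    | zero => rfl
    | succ i ih => simp [length_prefixList_succ, ih]
  refine omegaConcat_eq_of_forall (infOftenNonempty_singleton x) fun i j hj => ?_
  obtain rfl : j = 0 := by simpa using hj
  simp [hlen]

end Blocks

namespace BuchiAutomaton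

variable (M : BuchiAutomaton A)

def Reaches : M.Q → List A → M.Q → Prop
  | q, [], q' => q = q'
  | q, a :: w, q' => ∃ p ∈ M.step q a, Reaches p w q'

def ReachesAcc (q : M.Q) (w : List A) (q' : M.Q) : Prop :=
  ∃ w₁ w₂, w = w₁ ++ w₂ ∧ ∃ p ∈ M.acc, M.Reaches q w₁ p ∧ M.Reaches p w₂ q'

def profile (w : List A) : M.Q → M.Q → Prop × Prop := fun q q' =>
  (M.Reaches q w q', M.ReachesAcc q w q')

def IsRunOn (σ : ℕ → M.Q) (w : List A) : Prop :=
  ∀ j (hj : j < w.length), σ (j + 1) ∈ M.step (σ j) w[j]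

variable {M}

lemma reaches_append {q q' : M.Q} {w₁ w₂ : List A} :
    M.Reaches q (w₁ ++ w₂) q' ↔ ∃ p, M.Reaches q w₁ p ∧ M.Reaches p w₂ q' := by
  induction w₁ generalizing q with
  | nil => simp [Reaches]
  | cons a w ih =>
    simp only [List.cons_append, Reaches, ih]
    exact ⟨fun ⟨r, hr, p, h₁, h₂⟩ => ⟨p, ⟨r, hr, h₁⟩, h₂⟩,
      fun ⟨p, ⟨r, hr, h₁⟩, h₂⟩ => ⟨r, hr, p, h₁, h₂⟩⟩

lemma Reaches.append {q p q' : M.Q} {w₁ w₂ : List A} (h₁ : M.Reaches q w₁ p)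
    (h₂ : M.Reaches p w₂ q') : M.Reaches q (w₁ ++ w₂) q' :=
  reaches_append.mpr ⟨p, h₁, h₂⟩

lemma reachesAcc_append {q q' : M.Q} {w₁ w₂ : List A} :
    M.ReachesAcc q (w₁ ++ w₂) q' ↔
      ∃ p, (M.ReachesAcc q w₁ p ∧ M.Reaches p w₂ q') ∨
        (M.Reaches q w₁ p ∧ M.ReachesAcc p w₂ q') := by
  constructor
  · rintro ⟨x₁, x₂, hw, p, hp, h₁, h₂⟩
    rcases List.append_eq_append_iff.mp hw with ⟨y, rfl, rfl⟩ | ⟨y, rfl, rfl⟩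
    · obtain ⟨r, hr₁, hr₂⟩ := reaches_append.mp h₁
      exact ⟨r, .inr ⟨hr₁, y, x₂, rfl, p, hp, hr₂, h₂⟩⟩
    · obtain ⟨r, hr₁, hr₂⟩ := reaches_append.mp h₂
      exact ⟨r, .inl ⟨⟨x₁, y, rfl, p, hp, h₁, hr₁⟩, hr₂⟩⟩
  · rintro ⟨r, ⟨⟨x₁, x₂, rfl, p, hp, h₁, h₂⟩, h⟩ | ⟨h, ⟨x₁, x₂, rfl, p, hp, h₁, h₂⟩⟩⟩
    · exact ⟨x₁, x₂ ++ w₂, by rw [List.append_assoc], p, hp, h₁, h₂.append h⟩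
    · exact ⟨w₁ ++ x₁, x₂, by rw [List.append_assoc], p, hp, h.append h₁, h₂⟩

lemma profile_append {u u' v v' : List A} (hu : M.profile u = M.profile u')
    (hv : M.profile v = M.profile v') : M.profile (u ++ v) = M.profile (u' ++ v') := by
  have reaches_eq {w w'} (h : M.profile w = M.profile w') (q q') :
      M.Reaches q w q' = M.Reaches q w' q' := congrArg Prod.fst (congrFun₂ h q q')
  have reachesAcc_eq {w w'} (h : M.profile w = M.profile w') (q q') :
      M.ReachesAcc q w q' = M.ReachesAcc q w' q' := congrArg Prod.snd (congrFun₂ h q q')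
  funext q q'
  simp only [profile, reaches_append, reachesAcc_append, reaches_eq hu, reaches_eq hv,
    reachesAcc_eq hu, reachesAcc_eq hv]

lemma isRunOn_cons {σ : ℕ → M.Q} {a : A} {w : List A} :
    M.IsRunOn σ (a :: w) ↔ σ 1 ∈ M.step (σ 0) a ∧ M.IsRunOn (fun j => σ (j + 1)) w := by
  refine ⟨fun h => ⟨h 0 (by simp), fun j hj => h (j + 1) (by simpa)⟩, ?_⟩
  rintro ⟨h₀, h⟩ (_ | j) hj
  · exact h₀
  · exact h j (by simpa using hj)

lemma isRunOn_append {σ : ℕ → M.Q} {w₁ w₂ : List A} :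
    M.IsRunOn σ (w₁ ++ w₂) ↔
      M.IsRunOn σ w₁ ∧ M.IsRunOn (fun j => σ (w₁.length + j)) w₂ := by
  refine ⟨fun h => ⟨fun j hj => ?_, fun j hj => ?_⟩, fun ⟨h₁, h₂⟩ j hj => ?_⟩
  · have := h j (by simp; omega)
    rw [List.getElem_append_left hj] at this
    exact this
  · have := h (w₁.length + j) (by simp; omega)
    rw [List.getElem_append_right (by omega)] at this
    simpa [Nat.add_assoc] using this
  · rcases Nat.lt_or_ge j w₁.length with hj₁ | hj₁
    · simpa [List.getElem_append, hj₁] using h₁ j hj₁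
    · obtain ⟨k, rfl⟩ := Nat.exists_eq_add_of_le hj₁
      simpa [List.getElem_append, Nat.add_assoc] using h₂ k (by simp at hj; omega)

lemma reaches_iff_exists_run {q q' : M.Q} {w : List A} :
    M.Reaches q w q' ↔ ∃ σ : ℕ → M.Q, σ 0 = q ∧ σ w.length = q' ∧ M.IsRunOn σ w := by
  induction w generalizing q with
  | nil =>
    refine ⟨fun h => ⟨fun _ => q, rfl, h, fun j hj => by simp at hj⟩, ?_⟩
    rintro ⟨σ, rfl, rfl, -⟩
    rfl
  | cons a w ih =>
    simp only [Reaches, ih, isRunOn_cons, List.length_cons]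
    constructor
    · rintro ⟨p, hp, σ, rfl, rfl, hσ⟩
      exact ⟨seqCons q σ, rfl, rfl, hp, hσ⟩
    · rintro ⟨σ, rfl, rfl, hσ₀, hσ⟩
      exact ⟨σ 1, hσ₀, fun j => σ (j + 1), rfl, rfl, hσ⟩

lemma reachesAcc_iff_exists_run {q q' : M.Q} {w : List A} :
    M.ReachesAcc q w q' ↔ ∃ σ : ℕ → M.Q, σ 0 = q ∧ σ w.length = q' ∧ M.IsRunOn σ w ∧
      ∃ j ≤ w.length, σ j ∈ M.acc := by
  constructor
  · rintro ⟨w₁, w₂, rfl, p, hp, h₁, h₂⟩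
    obtain ⟨σ₁, rfl, rfl, hσ₁⟩ := reaches_iff_exists_run.mp h₁
    obtain ⟨σ₂, hσ₂₀, rfl, hσ₂⟩ := reaches_iff_exists_run.mp h₂
    let σ n := if n ≤ w₁.length then σ₁ n else σ₂ (n - w₁.length)
    have hσ : (fun j => σ (w₁.length + j)) = σ₂ := by
      funext j
      rcases j with _ | j
      · simp [σ, hσ₂₀]
      · simp [σ]
    refine ⟨σ, by simp [σ], congrFun hσ w₂.length ▸ by simp, ?_, w₁.length, by simp, by simpa [σ]⟩
    refine isRunOn_append.mpr ⟨fun j hj => ?_, hσ ▸ hσ₂⟩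
    simpa [σ, hj.le, Nat.succ_le_of_lt hj] using hσ₁ j hj
  · rintro ⟨σ, rfl, rfl, hσ, j, hj, hacc⟩
    rw [← List.take_append_drop j w] at hσ
    obtain ⟨hσ₁, hσ₂⟩ := isRunOn_append.mp hσ
    have hlen : (w.take j).length = j := by simp; omega
    refine ⟨w.take j, w.drop j, (List.take_append_drop j w).symm, σ j, hacc,
      reaches_iff_exists_run.mpr ⟨σ, rfl, by rw [hlen], hσ₁⟩,
      reaches_iff_exists_run.mpr ⟨_, by simp [hlen], by simp [hlen]; congr 1; omega, hσ₂⟩⟩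

section OmegaConcat

variable [Inhabited A]

lemma isRunOn_block {u : ℕ → List A} {ρ : ℕ → M.Q}
    (hρ : ∀ n, ρ (n + 1) ∈ M.step (ρ n) (omegaConcat u n)) (i : ℕ) :
    M.IsRunOn (fun j => ρ ((prefixList u i).length + j)) (u i) := fun j hj => by
  simpa [← omegaConcat_length_prefixList_add u hj, Nat.add_assoc] using
    hρ ((prefixList u i).length + j)

lemma exists_blockRun_of_accepts {u : ℕ → List A} (hu : InfOftenNonempty u)
    (h : M.Accepts (omegaConcat u)) :
    ∃ q : ℕ → M.Q, q 0 ∈ M.init ∧ (∀ i, M.Reaches (q i) (u i) (q (i + 1))) ∧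
      ∀ N, ∃ i, N ≤ i ∧ M.ReachesAcc (q i) (u i) (q (i + 1)) := by
  obtain ⟨ρ, hinit, hρ, hacc⟩ := h
  refine ⟨fun i => ρ (prefixList u i).length, hinit, fun i => ?_, fun N => ?_⟩
  · exact reaches_iff_exists_run.mpr
      ⟨_, rfl, by simp [length_prefixList_succ], isRunOn_block hρ i⟩
  · obtain ⟨m, hm, hmacc⟩ := hacc (prefixList u N).length
    obtain ⟨i, hi₁, hi₂⟩ := exists_mem_block rfl hu.exists_lt_length_prefixList m
    rw [length_prefixList_succ] at hi₂
    have hNi : N ≤ i := not_lt.mp fun h => by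
      have := monotone_length_prefixList u h
      simp only [length_prefixList_succ] at this
      omega
    refine ⟨i, hNi, reachesAcc_iff_exists_run.mpr ⟨_, rfl, by simp [length_prefixList_succ],
      isRunOn_block hρ i, m - (prefixList u i).length, by omega, ?_⟩⟩
    simpa [Nat.add_sub_cancel' hi₁] using hmacc

lemma accepts_of_blockRun {u : ℕ → List A} (hu : InfOftenNonempty u) {q : ℕ → M.Q}
    (hinit : q 0 ∈ M.init) (hreach : ∀ i, M.Reaches (q i) (u i) (q (i + 1)))
    (hacc : ∀ N, ∃ i, N ≤ i ∧ M.ReachesAcc (q i) (u i) (q (i + 1))) :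
    M.Accepts (omegaConcat u) := by
  have hb (i : ℕ) : (prefixList u (i + 1)).length - (prefixList u i).length = (u i).length := by
    simp [length_prefixList_succ]
  have hrun (i : ℕ) : ∃ σ : ℕ → M.Q, σ 0 = q i ∧ σ (u i).length = q (i + 1) ∧
      M.IsRunOn σ (u i) ∧
      (M.ReachesAcc (q i) (u i) (q (i + 1)) → ∃ j ≤ (u i).length, σ j ∈ M.acc) := by
    by_cases hA : M.ReachesAcc (q i) (u i) (q (i + 1))
    · obtain ⟨σ, h₀, h₁, hσ, hj⟩ := reachesAcc_iff_exists_run.mp hA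
      exact ⟨σ, h₀, h₁, hσ, fun _ => hj⟩
    · obtain ⟨σ, h₀, h₁, hσ⟩ := reaches_iff_exists_run.mp (hreach i)
      exact ⟨σ, h₀, h₁, hσ, (absurd · hA)⟩
  choose σ hσ₀ hσ₁ hσ hσacc using hrun
  obtain ⟨ρ, hρ⟩ := exists_seq_eq_on_blocks (monotone_length_prefixList u)
    hu.exists_lt_length_prefixList σ fun i => by rw [hb, hσ₁, hσ₀]
  simp only [hb] at hρ
  refine ⟨ρ, (hρ 0 0 (Nat.zero_le _)).trans (hσ₀ 0) ▸ hinit, fun n => ?_, fun n => ?_⟩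
  · obtain ⟨i, hi₁, hi₂⟩ := exists_mem_block rfl hu.exists_lt_length_prefixList n
    obtain ⟨j, rfl⟩ := Nat.exists_eq_add_of_le hi₁
    have hj : j < (u i).length := by rw [length_prefixList_succ] at hi₂; omega
    rw [hρ i j hj.le, Nat.add_assoc, hρ i (j + 1) hj, omegaConcat_length_prefixList_add u hj]
    exact hσ i j hj
  · obtain ⟨k, hk⟩ := hu.exists_lt_length_prefixList n
    obtain ⟨i, hki, hi⟩ := hacc k
    obtain ⟨j, hj, hjacc⟩ := hσacc i hi
    have : (prefixList u k).length ≤ (prefixList u i).length := monotone_length_prefixList u hki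
    exact ⟨(prefixList u i).length + j, by omega, by rwa [hρ i j hj]⟩

lemma accepts_omegaConcat_iff {u : ℕ → List A} (hu : InfOftenNonempty u) :
    M.Accepts (omegaConcat u) ↔
      ∃ q : ℕ → M.Q, q 0 ∈ M.init ∧ (∀ i, M.Reaches (q i) (u i) (q (i + 1))) ∧
        ∀ N, ∃ i, N ≤ i ∧ M.ReachesAcc (q i) (u i) (q (i + 1)) :=
  ⟨exists_blockRun_of_accepts hu, fun ⟨_, hinit, hreach, hacc⟩ =>
    accepts_of_blockRun hu hinit hreach hacc⟩

lemma accepts_omegaConcat_iff_of_profile_eq {u u' : ℕ → List A} (hu : InfOftenNonempty u)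
    (hu' : InfOftenNonempty u') (h : ∀ i, M.profile (u i) = M.profile (u' i)) :
    M.Accepts (omegaConcat u) ↔ M.Accepts (omegaConcat u') := by
  have reaches_eq (i q q') : M.Reaches q (u i) q' = M.Reaches q (u' i) q' :=
    congrArg Prod.fst (congrFun₂ (h i) q q')
  have reachesAcc_eq (i q q') : M.ReachesAcc q (u i) q' = M.ReachesAcc q (u' i) q' :=
    congrArg Prod.snd (congrFun₂ (h i) q q')
  simp only [accepts_omegaConcat_iff hu, accepts_omegaConcat_iff hu', reaches_eq, reachesAcc_eq]

end OmegaConcat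

end BuchiAutomaton

lemma finiteIndex_of_forall_eq {r : List A → List A → Prop} (hr : Equivalence r) {β : Type*}
    [Finite β] (f : List A → β) (hf : ∀ u v, f u = f v → r u v) : FiniteIndex r := by
  let cls w := {v | r w v}
  have hcls : cls.FactorsThrough f := fun u v h => Set.ext fun w =>
    ⟨fun hw => hr.trans (hr.symm (hf u v h)) hw, fun hw => hr.trans (hf u v h) hw⟩
  refine (Set.finite_range (Function.extend f cls ⊥)).subset ?_
  rintro _ ⟨w, rfl⟩
  exact ⟨f w, hcls.extend_apply ⊥ w⟩

section Arnold

variable [Inhabited A] {L : Set (ℕ → A)}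

lemma arnoldEq_equivalence (L : Set (ℕ → A)) : Equivalence (ArnoldEq L) where
  refl _ := ⟨fun _ _ => Iff.rfl, fun _ _ _ => Iff.rfl⟩
  symm h := ⟨fun w x => (h.1 w x).symm, fun w v hv => (h.2 w v hv).symm⟩
  trans h h' := ⟨fun w x => (h.1 w x).trans (h'.1 w x),
    fun w v hv => (h.2 w v hv).trans (h'.2 w v hv)⟩

lemma ArnoldEq.prepend_mem_iff {u u' : List A} (h : ArnoldEq L u u') (x : ℕ → A) :
    prepend u x ∈ L ↔ prepend u' x ∈ L := by
  simpa using h.1 [] x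

lemma ArnoldEq.prepend_omegaPow_mem_iff {z z' : List A} (h : ArnoldEq L z z') (hz : z ≠ [])
    (hz' : z' ≠ []) (w : List A) :
    prepend w (omegaPow z) ∈ L ↔ prepend w (omegaPow z') ∈ L := by
  -- `w z^ω = w (z z)^ω ~ w (z' z)^ω = w z' (z z')^ω ~ w z' (z' z')^ω = w z'^ω`
  calc prepend w (omegaPow z) ∈ L ↔ prepend w (omegaPow (z ++ z)) ∈ L := by
        rw [omegaPow_append_self hz]
    _ ↔ prepend (w ++ z') (omegaPow (z ++ z')) ∈ L := by
        rw [h.2 w z hz, omegaPow_append (List.append_ne_nil_of_left_ne_nil hz' z), prepend_append]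
    _ ↔ prepend w (omegaPow z') ∈ L := by
        rw [h.2 (w ++ z') z' hz', omegaPow_append_self hz', prepend_append,
          prepend_omegaPow_self]

lemma arnoldEq_concatCongr (L : Set (ℕ → A)) : ConcatCongr (ArnoldEq L) := by
  intro u₁ u₁' u₂ u₂' h₁ h₂
  constructor
  · intro w x
    rw [prepend_append, ← prepend_append w, h₂.1, prepend_append w, h₁.1, prepend_append u₁']
  · intro w v hv
    -- `(u₁ u₂ v)^ω ~ (u₁' u₂ v)^ω = u₁' (u₂ v u₁')^ω ~ u₁' (u₂' v u₁')^ω = (u₁' u₂' v)^ω`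
    have hrot (s : List A) :
        omegaPow (u₁' ++ s ++ v) = prepend u₁' (omegaPow (s ++ (v ++ u₁'))) := by
      rw [List.append_assoc, omegaPow_append (List.append_ne_nil_of_right_ne_nil _
        (List.append_ne_nil_of_right_ne_nil _ hv)), List.append_assoc]
    rw [List.append_assoc, h₁.2 w _ (List.append_ne_nil_of_right_ne_nil _ hv),
      ← List.append_assoc, hrot, hrot, ← prepend_append, ← prepend_append,
      h₂.2 _ _ (List.append_ne_nil_of_left_ne_nil hv _)]

lemma ArnoldEq.prefixList {u u' : ℕ → List A} (h : ∀ i, ArnoldEq L (u i) (u' i)) (m : ℕ) :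
    ArnoldEq L (prefixList u m) (prefixList u' m) := by
  induction m with
  | zero => exact (arnoldEq_equivalence L).refl _
  | succ m ih =>
    rw [prefixList_succ, prefixList_succ]
    exact arnoldEq_concatCongr L _ _ _ _ ih (h m)

lemma prepend_prepend_eq_omegaConcat (w u : List A) (x : ℕ → A) :
    prepend w (prepend u x) = omegaConcat (seqCons w (seqCons u fun k => [x k])) := by
  rw [omegaConcat_seqCons w ((infOftenNonempty_singleton x).seqCons u),
    omegaConcat_seqCons u (infOftenNonempty_singleton x), omegaConcat_singleton]

lemma prepend_omegaPow_eq_omegaConcat (w : List A) {z : List A} (hz : z ≠ []) :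
    prepend w (omegaPow z) = omegaConcat (seqCons w fun _ => z) := by
  rw [omegaConcat_seqCons w (InfOftenNonempty.const hz), omegaConcat_const hz]

lemma arnoldEq_of_profile_eq {M : BuchiAutomaton A} (hM : ∀ x, x ∈ L ↔ M.Accepts x)
    {u u' : List A} (h : M.profile u = M.profile u') : ArnoldEq L u u' := by
  constructor
  · intro w x
    have hx := infOftenNonempty_singleton x
    rw [hM, hM, prepend_prepend_eq_omegaConcat, prepend_prepend_eq_omegaConcat]
    refine BuchiAutomaton.accepts_omegaConcat_iff_of_profile_eq ((hx.seqCons _).seqCons _)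
      ((hx.seqCons _).seqCons _) fun i => ?_
    rcases i with _ | _ | i
    exacts [rfl, h, rfl]
  · intro w v hv
    have hne {s : List A} : s ++ v ≠ [] := List.append_ne_nil_of_right_ne_nil s hv
    rw [hM, hM, prepend_omegaPow_eq_omegaConcat w hne, prepend_omegaPow_eq_omegaConcat w hne]
    refine BuchiAutomaton.accepts_omegaConcat_iff_of_profile_eq
      ((InfOftenNonempty.const hne).seqCons _) ((InfOftenNonempty.const hne).seqCons _) fun i => ?_
    rcases i with _ | i
    exacts [rfl, BuchiAutomaton.profile_append h rfl]

lemma arnoldEq_finiteIndex {M : BuchiAutomaton A} (hM : ∀ x, x ∈ L ↔ M.Accepts x) :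
    FiniteIndex (ArnoldEq L) :=
  have := M.finQ
  finiteIndex_of_forall_eq (arnoldEq_equivalence L) M.profile fun _ _ => arnoldEq_of_profile_eq hM

end Arnold

/-- A weak form of Ramsey's theorem for pairs, proved with a nonprincipal ultrafilter. -/
lemma exists_chain_color_eq {S : Type*} [Finite S] (c : ℕ → ℕ → S) {R : ℕ → ℕ → Prop}
    (hR : ∀ i, ∀ᶠ j in atTop, R i j) :
    ∃ I : ℕ → ℕ, ∃ s, ∀ k, R (I k) (I (k + 1)) ∧ c (I k) (I (k + 1)) = s := by
  let U : Ultrafilter ℕ := hyperfilter ℕ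
  have hcolor (f : ℕ → S) : ∃ s, ∀ᶠ j in (U : Filter ℕ), f j = s :=
    Ultrafilter.eventually_exists_iff.mp (.of_forall fun j => ⟨f j, rfl⟩)
  -- `t i` is the colour of `c i j` for `U`-almost all `j`, and `s` that of `t i` for `U`-almost all `i`
  choose t ht using fun i => hcolor (c i)
  obtain ⟨s, hs⟩ := hcolor t
  have hnext (i : {i // t i = s}) : ∃ j : {j // t j = s}, R i j ∧ c i j = s :=
    let ⟨j, hjs, hR, hc⟩ :=
      (hs.and (((hR i).filter_mono Nat.hyperfilter_le_atTop).and (ht i))).exists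
    ⟨⟨j, hjs⟩, hR, hc.trans i.2⟩
  choose next hnextR hnextc using hnext
  obtain ⟨i₀, hi₀⟩ := hs.exists
  refine ⟨fun k => (next^[k] ⟨i₀, hi₀⟩ : ℕ), s, fun k => ?_⟩
  simp only [Function.iterate_succ_apply']
  exact ⟨hnextR _, hnextc _⟩

section Regroup

def seg (u : ℕ → List A) (a b : ℕ) : List A := prefixList (fun i => u (a + i)) (b - a)

lemma prefixList_eq_append_seg (u : ℕ → List A) {a b : ℕ} (hab : a ≤ b) :
    prefixList u b = prefixList u a ++ seg u a b := by
  rw [seg, ← prefixList_add, Nat.add_sub_cancel' hab]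

lemma InfOftenNonempty.eventually_seg_ne_nil {u : ℕ → List A} (hu : InfOftenNonempty u) (a : ℕ) :
    ∀ᶠ b in atTop, seg u a b ≠ [] := by
  obtain ⟨j, hj, hne⟩ := hu a
  filter_upwards [eventually_gt_atTop j] with b hb hseg
  have h₁ := congrArg List.length (prefixList_eq_append_seg u (hj.trans hb.le))
  have h₂ := monotone_length_prefixList u (Nat.succ_le_of_lt hb)
  have h₃ := monotone_length_prefixList u hj
  simp only [hseg, List.append_nil, length_prefixList_succ] at h₁ h₂ h₃
  have := List.length_pos_iff.mpr hne
  omega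

variable [Inhabited A]

lemma omegaConcat_regroup {u : ℕ → List A} (hu : InfOftenNonempty u) {I : ℕ → ℕ}
    (hI : StrictMono I) :
    omegaConcat (seqCons (prefixList u (I 0)) fun k => seg u (I k) (I (k + 1))) =
      omegaConcat u := by
  have hprefix (m : ℕ) : prefixList (seqCons (prefixList u (I 0)) fun k => seg u (I k) (I (k + 1)))
      (m + 1) = prefixList u (I m) := by
    induction m with
    | zero => simp [prefixList_seqCons, prefixList_zero]
    | succ m ih =>
      rw [prefixList_succ, ih]
      exact (prefixList_eq_append_seg u (hI.monotone (Nat.le_succ m))).symm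
  refine omegaConcat_congr fun n => ?_
  obtain ⟨m, hm⟩ := hu.exists_lt_length_prefixList n
  have : (prefixList u m).length ≤ (prefixList u (I m)).length :=
    monotone_length_prefixList u hI.le_apply
  exact ⟨m + 1, I m, by rw [hprefix]; omega, hprefix m⟩

lemma BuchiAutomaton.accepts_omegaConcat_iff_prepend_omegaPow {M : BuchiAutomaton A}
    {u : ℕ → List A} (hu : InfOftenNonempty u) {I : ℕ → ℕ} (hI : StrictMono I)
    (hne : ∀ k, seg u (I k) (I (k + 1)) ≠ [])
    (hp : ∀ k, M.profile (seg u (I k) (I (k + 1))) = M.profile (seg u (I 0) (I 1))) :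
    M.Accepts (omegaConcat u) ↔
      M.Accepts (prepend (prefixList u (I 0)) (omegaPow (seg u (I 0) (I 1)))) := by
  rw [← omegaConcat_regroup hu hI, prepend_omegaPow_eq_omegaConcat _ (hne 0)]
  refine accepts_omegaConcat_iff_of_profile_eq
    (InfOftenNonempty.seqCons _ fun k => ⟨k, le_rfl, hne k⟩)
    ((InfOftenNonempty.const (hne 0)).seqCons _) fun k => ?_
  rcases k with _ | k
  exacts [rfl, hp k]

lemma ArnoldEq.seg {L : Set (ℕ → A)} {u u' : ℕ → List A}
    (h : ∀ i, ArnoldEq L (u i) (u' i)) (a b : ℕ) : ArnoldEq L (seg u a b) (seg u' a b) :=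
  ArnoldEq.prefixList (fun i => h (a + i)) (b - a)

lemma arnoldEq_recognizes {L : Set (ℕ → A)} {M : BuchiAutomaton A}
    (hM : ∀ x, x ∈ L ↔ M.Accepts x) : Recognizes (ArnoldEq L) L := by
  intro u u' hu hu' hrel
  have := M.finQ
  obtain ⟨I, s, hI⟩ := exists_chain_color_eq
    (fun i j => (M.profile (seg u i j), M.profile (seg u' i j)))
    (R := fun i j => i < j ∧ seg u i j ≠ [] ∧ seg u' i j ≠ []) fun i =>
      (eventually_gt_atTop i).and ((hu.eventually_seg_ne_nil i).and (hu'.eventually_seg_ne_nil i))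
  have hImono : StrictMono I := strictMono_nat_of_lt_succ fun k => (hI k).1.1
  have hp k := (hI k).2.trans (hI 0).2.symm
  rw [hM, hM, M.accepts_omegaConcat_iff_prepend_omegaPow hu hImono (fun k => (hI k).1.2.1)
      fun k => congrArg Prod.fst (hp k),
    M.accepts_omegaConcat_iff_prepend_omegaPow hu' hImono (fun k => (hI k).1.2.2)
      fun k => congrArg Prod.snd (hp k), ← hM, ← hM]
  exact ((ArnoldEq.prefixList hrel (I 0)).prepend_mem_iff _).trans
    ((ArnoldEq.seg hrel (I 0) (I 1)).prepend_omegaPow_mem_iff (hI 0).1.2.1 (hI 0).1.2.2 _)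

end Regroup

/-- For an ω-regular language `L`, the Arnold congruence has finite index and is an
ω-congruence for `L`. -/
theorem statement18 [Inhabited A] (L : Set (ℕ → A)) (h : OmegaRegular L) :
    FiniteIndex (ArnoldEq L) ∧ ConcatCongr (ArnoldEq L) ∧ Recognizes (ArnoldEq L) L := by
  obtain ⟨M, hM⟩ := h
  exact ⟨arnoldEq_finiteIndex hM, arnoldEq_concatCongr L, arnoldEq_recognizes hM⟩
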